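/- For every integer n ≥ 2 and all (x,k), (y,l) ∈ G_n = Z_2 ≀ Z_n: ρ((x,k),(y,l)) ≤ 2(n − g) + 2, where g is the maximal number of vertices of an arc of Z_n disjoint from the set {k, l} ∪ (x △ y) (and g = 0 if no nonempty arc is disjoint from this set). -/

import Mathlib

open scoped symmDiff

/-- Elements of the lamplighter group `Z₂ ≀ Z_n`: a set of lit lamps and a position. -/
abbrev Lamp (n : ℕ) := Set (ZMod n) × ZMod n

/-- Group multiplication `(x,g)·(y,h) = (x △ (g+y), g+h)`. -/
def lampMul {n : ℕ} (u v : Lamp n) : Lamp n :=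
  (u.1 ∆ ((u.2 + ·) '' v.1), u.2 + v.2)

/-- Group inverse in the lamplighter group. -/
def lampInv {n : ℕ} (u : Lamp n) : Lamp n :=
  ((· - u.2) '' u.1, -u.2)

/-- The generator `t = (∅, 1)`. -/
def lampT (n : ℕ) : Lamp n := (∅, 1)

/-- The generator `a = ({0}, 0)`. -/
def lampA (n : ℕ) : Lamp n := ({0}, 0)

/-- The generator `ta`. -/
def lampTA (n : ℕ) : Lamp n := lampMul (lampT n) (lampA n)

/-- Word metric w.r.t. a generating set `S`: the least `m` such that `u⁻¹v`
is a product of `m` elements of `S ∪ S⁻¹`, i.e. `v = u·s₁⋯s_m`. -/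
noncomputable def wordDist {n : ℕ} (S : Set (Lamp n)) (u v : Lamp n) : ℕ :=
  sInf {m | ∃ w : List (Lamp n), w.length = m ∧
    (∀ s ∈ w, s ∈ S ∨ ∃ g ∈ S, s = lampInv g) ∧ v = w.foldl lampMul u}

/-- The word metric `ρ` on `Z₂ ≀ Z_n` w.r.t. the generating set `{t, ta}`. -/
noncomputable def lampDist (n : ℕ) (u v : Lamp n) : ℕ :=
  wordDist {lampT n, lampTA n} u v

/-- Length of the longest common prefix of two vertices of the binary tree. -/
def lgc : List Bool → List Bool → ℕ
  | a :: as, b :: bs => if a = b then lgc as bs + 1 else 0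
  | _, _ => 0

/-- Graph distance in the binary tree (vertices = `{0,1}`-sequences). -/
def treeDist (A B : List Bool) : ℕ := A.length + B.length - 2 * lgc A B

/-- The arc `{a, a+1, ..., a+m}` in `Z_n`. -/
def arcSet (n : ℕ) (a : ZMod n) (m : ℕ) : Set (ZMod n) :=
  {z | ∃ i ≤ m, z = a + (i : ZMod n)}

/-- The arc `P₁ = {n/6, ..., 5n/6}` of `Z_n` (identified with `{0,...,n-1}` via `val`). -/
def P1set (n : ℕ) : Set (ZMod n) := {z | n / 6 ≤ z.val ∧ z.val ≤ 5 * n / 6}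

/-- The subset `P_{1,n} = {(x,k) ∈ G_n : k ∈ P₁}`. -/
def lampP1 (n : ℕ) : Set (Lamp n) := {u | u.2 ∈ P1set n}

/-- The set `W_n ⊆ T_n × T_n`. -/
def Wset (n : ℕ) : Set (List Bool × List Bool) :=
  {p | p.1.length + p.2.length = n ∧ n / 6 ≤ p.1.length ∧ p.1.length ≤ 5 * n / 6}

open Classical in
/-- The map `φ_{1,n} : P_{1,n} → W_n`. -/
noncomputable def phi1 (n : ℕ) (u : Lamp n) : List Bool × List Bool :=
  ((List.range u.2.val).map fun j => if ((j : ℕ) : ZMod n) ∈ u.1 then true else false,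
   (List.range (n - u.2.val)).map fun i => if ((n - 1 - i : ℕ) : ZMod n) ∈ u.1 then true else false)

/-- "X admits an equivalent uniformly convex norm" (= superreflexivity, by Enflo). -/
def HasEquivUnifConvexNorm (X : Type*) [NormedAddCommGroup X] [NormedSpace ℝ X] : Prop :=
  ∃ N : X → ℝ,
    (∀ x, N x = 0 ↔ x = 0) ∧
    (∀ (c : ℝ) (x : X), N (c • x) = |c| * N x) ∧
    (∀ x y, N (x + y) ≤ N x + N y) ∧
    (∃ c₁ > (0 : ℝ), ∃ c₂ > (0 : ℝ), ∀ x, c₁ * ‖x‖ ≤ N x ∧ N x ≤ c₂ * ‖x‖) ∧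
    (∀ ε > (0 : ℝ), ∃ δ > (0 : ℝ), ∀ x y,
      N x ≤ 1 → N y ≤ 1 → ε ≤ N (x - y) → N (x + y) ≤ 2 - δ)

/-!
The complement of a longest arc avoiding `{k, l} ∪ (x △ y)` lies in an arc `B = {b, …, b + m}`
with `m ≤ n - g` (take `B = Z_n` when `g = 0`), so `B` contains `k`, `l` and every lamp on which
`x` and `y` differ. One tour of `B` joins `(x, b + i)` to `(y, b + j)`: walk left to `b - 1`, sweep
right across `B` using `ta` exactly at the lamps of `x △ y` and `t` elsewhere, then walk left to
`b + j`. It has length `2(m + 1) + i - j`, and since paths can be reversed we may take `i ≤ j`.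
-/

theorem Set.diff_singleton_symmDiff_of_mem {α : Type*} {s : Set α} {a : α} (ha : a ∈ s) :
    (s \ {a}) ∆ {a} = s := by
  rw [Disjoint.symmDiff_eq_sup Set.disjoint_sdiff_left]
  exact Set.sdiff_union_of_subset (Set.singleton_subset_iff.mpr ha)

variable {n : ℕ}

section WordPath

variable {S : Set (Lamp n)}

def WordPath (S : Set (Lamp n)) (u v : Lamp n) (m : ℕ) : Prop :=
  ∃ w : List (Lamp n), w.length = m ∧ (∀ s ∈ w, s ∈ S ∨ ∃ g ∈ S, s = lampInv g) ∧
    v = w.foldl lampMul u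

theorem wordDist_le_of_wordPath {u v : Lamp n} {m : ℕ} (h : WordPath S u v m) :
    wordDist S u v ≤ m :=
  Nat.sInf_le h

theorem WordPath.refl (u : Lamp n) : WordPath S u u 0 :=
  ⟨[], rfl, by simp, rfl⟩

theorem WordPath.single (u : Lamp n) {s : Lamp n} (hs : s ∈ S ∨ ∃ g ∈ S, s = lampInv g) :
    WordPath S u (lampMul u s) 1 :=
  ⟨[s], rfl, by simpa using hs, rfl⟩

theorem WordPath.trans {u v w : Lamp n} {a b : ℕ} (huv : WordPath S u v a)
    (hvw : WordPath S v w b) : WordPath S u w (a + b) := by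
  obtain ⟨p, rfl, hp, rfl⟩ := huv
  obtain ⟨q, rfl, hq, rfl⟩ := hvw
  refine ⟨p ++ q, List.length_append, ?_, (List.foldl_append ..).symm⟩
  simpa [or_imp, forall_and] using And.intro hp hq

theorem lampMul_lampMul_lampInv (u s : Lamp n) : lampMul (lampMul u s) (lampInv s) = u := by
  have shift : (fun a => u.2 + s.2 + (a - s.2)) = (u.2 + ·) := by funext a; ring
  refine Prod.ext ?_ (add_neg_cancel_right _ _)
  simp only [lampMul, lampInv, Set.image_image, shift, symmDiff_symmDiff_cancel_right]

theorem lampMul_lampInv_lampMul (u s : Lamp n) : lampMul (lampMul u (lampInv s)) s = u := by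
  have shift : (fun a => u.2 + (a - s.2)) = (u.2 + -s.2 + ·) := by funext a; ring
  refine Prod.ext ?_ (neg_add_cancel_right _ _)
  simp only [lampMul, lampInv, Set.image_image, shift, symmDiff_symmDiff_cancel_right]

theorem WordPath.symm {u v : Lamp n} {m : ℕ} (h : WordPath S u v m) : WordPath S v u m := by
  obtain ⟨w, rfl, hw, rfl⟩ := h
  induction w generalizing u with
  | nil => exact WordPath.refl u
  | cons s w ih =>
    have back : WordPath S (lampMul u s) u 1 := by
      rcases hw s List.mem_cons_self with hs | ⟨g, hg, rfl⟩
      · simpa [lampMul_lampMul_lampInv] using WordPath.single (lampMul u s) (Or.inr ⟨s, hs, rfl⟩)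
      · simpa [lampMul_lampInv_lampMul] using WordPath.single (lampMul u (lampInv g)) (Or.inl hg)
    exact (ih (fun s hs => hw s (List.mem_cons_of_mem _ hs))).trans back

end WordPath

section Tour

abbrev lampGens (n : ℕ) : Set (Lamp n) := {lampT n, lampTA n}

theorem lampMul_lampT (u : Lamp n) : lampMul u (lampT n) = (u.1, u.2 + 1) := by
  simp only [lampMul, lampT, Set.image_empty]
  exact Prod.ext (symmDiff_bot _) rfl

theorem lampMul_lampTA (u : Lamp n) : lampMul u (lampTA n) = (u.1 ∆ {u.2 + 1}, u.2 + 1) := by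
  simp [lampMul, lampTA, lampT, lampA]

theorem lampMul_lampInv_lampT (u : Lamp n) : lampMul u (lampInv (lampT n)) = (u.1, u.2 - 1) := by
  simp only [lampMul, lampInv, lampT, Set.image_empty]
  exact Prod.ext (symmDiff_bot _) (sub_eq_add_neg _ _).symm

theorem wordPath_step_t (u : Lamp n) : WordPath (lampGens n) u (u.1, u.2 + 1) 1 :=
  lampMul_lampT u ▸ WordPath.single u (Or.inl (Or.inl rfl))

theorem wordPath_step_ta (u : Lamp n) : WordPath (lampGens n) u (u.1 ∆ {u.2 + 1}, u.2 + 1) 1 :=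
  lampMul_lampTA u ▸ WordPath.single u (Or.inl (Or.inr rfl))

theorem wordPath_step_t_inv (u : Lamp n) : WordPath (lampGens n) u (u.1, u.2 - 1) 1 :=
  lampMul_lampInv_lampT u ▸ WordPath.single u (Or.inr ⟨lampT n, Or.inl rfl, rfl⟩)

theorem wordPath_move_left (z : Set (ZMod n)) (p : ZMod n) (c : ℕ) :
    WordPath (lampGens n) (z, p) (z, p - c) c := by
  induction c with
  | zero => simpa using WordPath.refl (z, p)
  | succ c ih => simpa [sub_sub] using ih.trans (wordPath_step_t_inv (z, p - c))

theorem wordPath_sweep (z S : Set (ZMod n)) (p : ZMod n) (L : ℕ)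
    (hS : ∀ w ∈ S, ∃ i < L, w = p + (i + 1 : ℕ)) :
    WordPath (lampGens n) (z, p) (z ∆ S, p + L) L := by
  induction L generalizing S with
  | zero =>
    obtain rfl : S = ∅ := Set.eq_empty_of_forall_notMem fun w hw => by simpa using hS w hw
    simpa [← Set.bot_eq_empty] using WordPath.refl (z, p)
  | succ L ih =>
    set q := p + (L + 1 : ℕ)
    have hS' : ∀ w ∈ S \ {q}, ∃ i < L, w = p + (i + 1 : ℕ) := by
      rintro w ⟨hw, hwq⟩
      obtain ⟨i, hi, rfl⟩ := hS w hw
      exact ⟨i, lt_of_le_of_ne (Nat.le_of_lt_succ hi) (by rintro rfl; exact hwq rfl), rfl⟩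
    have hpos : p + L + 1 = q := by simp only [q]; push_cast; ring
    by_cases hq : q ∈ S
    · have step := (ih _ hS').trans (wordPath_step_ta _)
      rwa [hpos, symmDiff_assoc, Set.diff_singleton_symmDiff_of_mem hq] at step
    · have step := (ih _ hS').trans (wordPath_step_t _)
      rwa [hpos, Set.sdiff_singleton_eq_self hq] at step

theorem wordPath_of_symmDiff_subset_arcSet {x y : Set (ZMod n)} {b : ZMod n} {i j m : ℕ}
    (hjm : j ≤ m) (hxy : x ∆ y ⊆ arcSet n b m) :
    WordPath (lampGens n) (x, b + i) (y, b + j) (i + 1 + (m + 1) + (m - j)) := by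
  have sweep := wordPath_sweep x (x ∆ y) (b - 1) (m + 1) fun w hw => by
    obtain ⟨q, hq, rfl⟩ := hxy hw
    exact ⟨q, Nat.lt_succ_of_le hq, by push_cast; ring⟩
  have start := wordPath_move_left x (b + i) (i + 1)
  have finish := wordPath_move_left y (b - 1 + (m + 1 : ℕ)) (m - j)
  rw [show b + i - (i + 1 : ℕ) = b - 1 by push_cast; ring] at start
  rw [show b - 1 + (m + 1 : ℕ) - (m - j : ℕ) = b + j by rw [Nat.cast_sub hjm]; push_cast; ring]
    at finish
  rw [symmDiff_symmDiff_cancel_left] at sweep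
  exact (start.trans sweep).trans finish

theorem lampDist_le_of_subset_arcSet {x y : Set (ZMod n)} {k l b : ZMod n} {m : ℕ}
    (h : {k, l} ∪ x ∆ y ⊆ arcSet n b m) : lampDist n (x, k) (y, l) ≤ 2 * (m + 1) := by
  obtain ⟨i, hi, rfl⟩ := h (Or.inl (Set.mem_insert k {l}))
  obtain ⟨j, hj, rfl⟩ := h (Or.inl (Set.mem_insert_of_mem _ rfl))
  have hxy : x ∆ y ⊆ arcSet n b m := fun z hz => h (Or.inr hz)
  rcases le_total i j with hij | hji
  · exact (wordDist_le_of_wordPath (wordPath_of_symmDiff_subset_arcSet hj hxy)).trans (by omega)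
  · rw [symmDiff_comm] at hxy
    exact (wordDist_le_of_wordPath (wordPath_of_symmDiff_subset_arcSet hi hxy).symm).trans
      (by omega)

end Tour

section Arc

variable [NeZero n]

theorem eq_add_val_sub (a z : ZMod n) : z = a + ((z - a).val : ℕ) := by
  rw [ZMod.natCast_zmod_val]; ring

theorem arcSet_sub_one_eq_univ (a : ZMod n) : arcSet n a (n - 1) = Set.univ :=
  Set.eq_univ_of_forall fun z =>
    ⟨(z - a).val, Nat.le_sub_one_of_lt (ZMod.val_lt _), eq_add_val_sub a z⟩

theorem compl_arcSet_subset (a : ZMod n) (m : ℕ) :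
    (arcSet n a m)ᶜ ⊆ arcSet n (a + (m + 1 : ℕ)) (n - m - 2) := by
  intro z hz
  have hv : (z - a).val < n := ZMod.val_lt _
  have hm : m < (z - a).val := lt_of_not_ge fun hle => hz ⟨_, hle, eq_add_val_sub a z⟩
  refine ⟨(z - a).val - (m + 1), by omega, ?_⟩
  rw [add_assoc, ← Nat.cast_add, Nat.add_sub_cancel' hm]
  exact eq_add_val_sub a z

end Arc

/-- `ρ((x,k),(y,l)) ≤ 2(n - g) + 2`, where `g` is the maximal number of vertices of an
arc of `Z_n` disjoint from `{k, l} ∪ (x △ y)` (and `g = 0` if there is no such arc). -/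
theorem lampDist_le_two_n_sub_gap
    (n : ℕ) (hn : 2 ≤ n) (x y : Set (ZMod n)) (k l : ZMod n) (g : ℕ)
    (hg : g = sSup {c | ∃ (a : ZMod n) (m : ℕ), m ≤ n - 1 ∧ c = m + 1 ∧
      Disjoint (arcSet n a m) ({k, l} ∪ (x ∆ y))}) :
    lampDist n (x, k) (y, l) ≤ 2 * (n - g) + 2 := by
  have : NeZero n := ⟨by omega⟩
  set gaps := {c | ∃ (a : ZMod n) (m : ℕ), m ≤ n - 1 ∧ c = m + 1 ∧
      Disjoint (arcSet n a m) ({k, l} ∪ (x ∆ y))}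
  rcases gaps.eq_empty_or_nonempty with hempty | hne
  · have hg0 : g = 0 := by rw [hg, hempty]; exact csSup_empty
    have := lampDist_le_of_subset_arcSet (x := x) (y := y) (k := k) (l := l)
      ((arcSet_sub_one_eq_univ k).symm ▸ Set.subset_univ _)
    omega
  · have hbdd : BddAbove gaps := ⟨n, by rintro _ ⟨a, m, hm, rfl, -⟩; omega⟩
    obtain ⟨a, m, -, hgm, hdisj⟩ : g ∈ gaps := hg ▸ Nat.sSup_mem hne hbdd
    have := lampDist_le_of_subset_arcSet fun z hz =>
      compl_arcSet_subset a m (Set.disjoint_right.mp hdisj hz)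
    omega
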